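/- Let f : ℝ_{>0}^n → ℝ_{>0} be defined by f(x) = (Σ_{j=1}^m c_j²·x^{2β_j})^{1/2} with β₁,…,β_m ∈ ℤ^n and nonzero reals c₁,…,c_m, let α₁,…,αₙ ∈ ℤ^n and σ₁,…,σₙ > 0, and let ξ_{i,j} (1 ≤ i ≤ n, 0 ≤ j ≤ n) be i.i.d. standard Gaussian random variables. Then the expected number of nondegenerate solutions in ℝ_{>0}^n of the random system ξ_{i,0}·f(x) + Σ_{j=1}^n ξ_{i,j}·σ_j·x^{α_j} = 0 (i = 1,…,n) is at most 2·2^{-n} = 2^{1-n}. -/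

import Mathlib

/-!
Write `A = (ξ_{i,j})_{1 ≤ j ≤ n}` and `y = -A⁻¹ ξ_{·,0}`. When `A` is invertible, a positive
solution satisfies `σ_j x^{α_j} = f(x) y_j`, so solutions exist only when `y` lies in the positive
orthant. Flipping the signs of columns of `A` preserves the Gaussian law and permutes the `2ⁿ`
open orthants, so this happens with probability at most `2⁻ⁿ`; and `det A ≠ 0` almost surely,
because the zero set of a nonzero polynomial is null.

In logarithmic coordinates the system reads `⟨α_j, log x⟩ = log f(x) + log (y_j / σ_j)`, so the
difference `v` of the logarithms of two solutions satisfies `⟨α_j, v⟩ = τ` for all `j`. For such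
`v` the Jacobian at a solution `x` maps `x * v` to a multiple of `ξ_{·,0}`; invertibility of the
Jacobian at one nondegenerate solution therefore puts all solutions on a single curve
`t ↦ x e^{t v}`. There they are level points of the convex function `t ↦ e^{-2τt} f(x e^{tv})²`,
a positive combination of exponentials, so of three of them the middle one is a critical point,
where the Jacobian kills `x * v`. Hence at most two solutions are nondegenerate.
-/

open MeasureTheory ProbabilityTheory Matrix
open scoped ENNReal BigOperators

/-- The monomial `x^α = x₁^{α₁} ⋯ xₙ^{αₙ}` for an integer exponent vector `α`. -/
noncomputable def zmon {n : ℕ} (α : Fin n → ℤ) (x : Fin n → ℝ) : ℝ :=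
  ∏ i, x i ^ α i

/-- The components `F_i(x) = ξ_{i,0} f(x) + ∑_j ξ_{i,j} σ_j x^{α_j}` of the random system,
where `f(x) = (∑_j c_j² x^{2β_j})^{1/2}`. -/
noncomputable def Fsys {n m : ℕ} (β : Fin m → Fin n → ℤ) (c : Fin m → ℝ)
    (α : Fin n → Fin n → ℤ) (σ : Fin n → ℝ) (ξ : Fin n → Fin (n + 1) → ℝ)
    (i : Fin n) (x : Fin n → ℝ) : ℝ :=
  ξ i 0 * Real.sqrt (∑ j, c j ^ 2 * zmon (fun k => 2 * β j k) x)
    + ∑ j : Fin n, ξ i j.succ * σ j * zmon (α j) x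

open scoped NNReal

namespace MvPolynomial

variable (μ : Measure ℝ) [SigmaFinite μ] [NullSingletonClass μ]

theorem measure_pi_fin_zeroSet_eq_zero :
    ∀ {k : ℕ} {p : MvPolynomial (Fin k) ℝ}, p ≠ 0 →
      Measure.pi (fun _ => μ) {x | eval x p = 0} = 0
  | 0, p, hp => by
    rw [eq_C_of_isEmpty p] at hp ⊢
    simp [show coeff 0 p ≠ 0 by simpa using hp]
  | k + 1, p, hp => by
    set e := MeasurableEquiv.piFinSuccAbove (fun _ : Fin (k + 1) => ℝ) 0
    set q := finSuccEquiv ℝ k p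
    have hq : q ≠ 0 := by simpa [q] using hp
    have hZ : MeasurableSet (e.symm ⁻¹' {x | eval x p = 0}) :=
      e.symm.measurable ((continuous_eval p).measurable (measurableSet_singleton 0))
    rw [← ((measurePreserving_piFinSuccAbove (fun _ => μ) 0).symm e).measure_preimage_equiv,
      Measure.prod_apply_symm hZ,
      lintegral_eq_zero_iff' (measurable_measure_prodMk_right hZ).aemeasurable]
    -- off the null set where the leading coefficient vanishes, each slice is a finite root set
    filter_upwards [compl_mem_ae_iff.mpr
      (measure_pi_fin_zeroSet_eq_zero (mt Polynomial.leadingCoeff_eq_zero.mp hq))] with w hw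
    have hroots : (fun a => (a, w)) ⁻¹' (e.symm ⁻¹' {x | eval x p = 0})
        = {a | (q.map (eval w)).IsRoot a} := by
      ext a
      simp only [e, Set.mem_preimage, MeasurableEquiv.piFinSuccAbove_symm_apply, Set.mem_ofPred_eq]
      show eval (Fin.insertNth 0 a w) p = 0 ↔ _
      rw [Fin.insertNth_zero', eval_eq_eval_mv_eval']
      rfl
    rw [hroots]
    refine Set.Finite.measure_zero (Polynomial.finite_setOfPred_isRoot fun h0 => hw ?_) μ
    simpa [q] using congrArg (Polynomial.coeff · q.natDegree) h0

theorem measure_pi_zeroSet_eq_zero {ι : Type*} [Fintype ι] {p : MvPolynomial ι ℝ} (hp : p ≠ 0) :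
    Measure.pi (fun _ : ι => μ) {x | eval x p = 0} = 0 := by
  let e := Fintype.equivFin ι
  have hp' : rename e p ≠ 0 := by
    rwa [Ne, ← map_zero (rename e), (rename_injective _ e.injective).eq_iff]
  rw [← (measurePreserving_piCongrLeft (fun _ : ι => μ) e.symm).measure_preimage_equiv]
  convert measure_pi_fin_zeroSet_eq_zero μ hp' using 2
  ext x
  simp only [Set.mem_preimage, Set.mem_ofPred_eq, eval_rename]
  congr! 3
  ext i
  simp [MeasurableEquiv.coe_piCongrLeft, Equiv.piCongrLeft_apply_eq_cast]

end MvPolynomial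

theorem measurePreserving_pi_uncurry {ι κ : Type*} [Fintype ι] [Fintype κ] {α : Type*}
    [MeasurableSpace α] (μ : Measure α) [SigmaFinite μ] :
    MeasurePreserving (fun (ξ : ι → κ → α) (p : ι × κ) => ξ p.1 p.2)
      (Measure.pi fun _ : ι => Measure.pi fun _ : κ => μ) (Measure.pi fun _ : ι × κ => μ) := by
  have hmeas : Measurable fun (ξ : ι → κ → α) (p : ι × κ) => ξ p.1 p.2 := by fun_prop
  refine ⟨hmeas, (Measure.pi_eq fun s hs => ?_).symm⟩
  rw [Measure.map_apply hmeas (.univ_pi hs)]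
  have : (fun (ξ : ι → κ → α) (p : ι × κ) => ξ p.1 p.2) ⁻¹' Set.univ.pi s
      = Set.univ.pi fun i => Set.univ.pi fun j => s (i, j) := by
    ext; simp
  simp [this, Measure.pi_pi, Fintype.prod_prod_type]

theorem ae_det_ne_zero_of_injective {m κ : Type*} [Fintype m] [DecidableEq m] [Fintype κ]
    (μ : Measure ℝ) [SigmaFinite μ] [NullSingletonClass μ] {g : m → κ}
    (hg : Function.Injective g) :
    ∀ᵐ ξ ∂(Measure.pi fun _ : m => Measure.pi fun _ : κ => μ),
      (Matrix.of fun i j => ξ i (g j)).det ≠ 0 := by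
  set P := MvPolynomial.rename (Prod.map id g) (Matrix.mvPolynomialX m m ℝ).det
  have hP : P ≠ 0 := by
    rw [Ne, ← map_zero (MvPolynomial.rename (Prod.map id g)),
      (MvPolynomial.rename_injective _ (Function.injective_id.prodMap hg)).eq_iff]
    exact Matrix.det_mvPolynomialX_ne_zero m ℝ
  have hnull := (measurePreserving_pi_uncurry (ι := m) (κ := κ) μ).quasiMeasurePreserving
    |>.preimage_null (MvPolynomial.measure_pi_zeroSet_eq_zero μ hP)
  refine measure_eq_zero_iff_ae_notMem.mp hnull |>.mono fun ξ hξ => ?_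
  simpa [P, MvPolynomial.eval_rename, Matrix.eval_det_mvPolynomialX] using hξ

theorem measurePreserving_const_mul_gaussianReal {c : ℝ} (hc : c ^ 2 = 1) (v : ℝ≥0) :
    MeasurePreserving (c * ·) (gaussianReal 0 v) (gaussianReal 0 v) := by
  refine ⟨measurable_const_mul c, ?_⟩
  rw [gaussianReal_map_const_mul, mul_zero]
  congr
  ext
  simp [hc]

theorem measure_le_inv_card_of_pairwise_disjoint {Ω S : Type*} [MeasurableSpace Ω] [Fintype S]
    {μ : Measure Ω} [IsProbabilityMeasure μ] {E : S → Set Ω} (hE : ∀ s, MeasurableSet (E s))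
    (hdisj : Pairwise (Function.onFun Disjoint E)) {A : Set Ω} (hA : ∀ s, μ (E s) = μ A) :
    μ A ≤ (Fintype.card S : ℝ≥0∞)⁻¹ := by
  rw [ENNReal.le_inv_iff_mul_le, mul_comm, ← nsmul_eq_mul, ← Finset.card_univ,
    ← Finset.sum_const, ← Finset.sum_congr rfl fun s _ => hA s,
    ← measure_biUnion_finset (fun s _ t _ hst => hdisj hst) fun s _ => hE s]
  exact prob_le_one

section SignSymmetry

variable {n : ℕ}

noncomputable def linearPart (ξ : Fin n → Fin (n + 1) → ℝ) : Matrix (Fin n) (Fin n) ℝ :=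
  Matrix.of fun i j => ξ i j.succ

noncomputable def linearSolution (ξ : Fin n → Fin (n + 1) → ℝ) : Fin n → ℝ :=
  (linearPart ξ)⁻¹ *ᵥ fun i => -ξ i 0

theorem continuous_linearPart : Continuous (linearPart (n := n)) :=
  continuous_pi fun i => continuous_pi fun j => (continuous_apply j.succ).comp (continuous_apply i)

theorem measurable_linearSolution : Measurable (linearSolution (n := n)) := by
  refine measurable_pi_lambda _ fun j => ?_
  simp only [linearSolution, Matrix.mulVec, dotProduct, Matrix.inv_def, Ring.inverse_eq_inv',
    Matrix.smul_apply, smul_eq_mul]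
  refine Finset.measurable_sum _ fun k _ => Measurable.mul ?_ (by fun_prop)
  exact continuous_linearPart.matrix_det.measurable.inv.mul
    (continuous_linearPart.matrix_adjugate.matrix_elem j k).measurable

theorem measurableSet_linearSolution_pos :
    MeasurableSet {ξ : Fin n → Fin (n + 1) → ℝ | ∀ j, 0 < linearSolution ξ j} := by
  simp only [Set.ofPred_forall]
  exact .iInter fun j =>
    measurableSet_lt measurable_const ((measurable_pi_apply j).comp measurable_linearSolution)

def signVec (s : Fin n → Bool) : Fin n → ℝ := fun j => if s j then -1 else 1

theorem signVec_sq (s : Fin n → Bool) (j : Fin n) : signVec s j ^ 2 = 1 := by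
  unfold signVec; split_ifs <;> norm_num

def signFlip (s : Fin n → Bool) (ξ : Fin n → Fin (n + 1) → ℝ) : Fin n → Fin (n + 1) → ℝ :=
  fun i j => (Fin.cons 1 (signVec s) : Fin (n + 1) → ℝ) j * ξ i j

theorem measurePreserving_signFlip (s : Fin n → Bool) (v : ℝ≥0) :
    MeasurePreserving (signFlip s)
      (Measure.pi fun _ : Fin n => Measure.pi fun _ : Fin (n + 1) => gaussianReal 0 v)
      (Measure.pi fun _ : Fin n => Measure.pi fun _ : Fin (n + 1) => gaussianReal 0 v) := by
  refine measurePreserving_pi _ _ fun _ => measurePreserving_pi _ _ fun j =>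
    measurePreserving_const_mul_gaussianReal ?_ v
  cases j using Fin.cases with
  | zero => simp
  | succ j => simpa using signVec_sq s j

theorem linearPart_signFlip (s : Fin n → Bool) (ξ : Fin n → Fin (n + 1) → ℝ) :
    linearPart (signFlip s ξ) = linearPart ξ * Matrix.diagonal (signVec s) := by
  ext i j
  simp [linearPart, signFlip, mul_comm]

theorem linearSolution_signFlip (s : Fin n → Bool) (ξ : Fin n → Fin (n + 1) → ℝ) :
    linearSolution (signFlip s ξ) = signVec s * linearSolution ξ := by
  have hD : (Matrix.diagonal (signVec s))⁻¹ = Matrix.diagonal (signVec s) :=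
    Matrix.inv_eq_left_inv (by rw [Matrix.diagonal_mul_diagonal]; simp [← sq, signVec_sq])
  ext j
  simp [linearSolution, linearPart_signFlip, Matrix.mul_inv_rev, hD, ← Matrix.mulVec_mulVec,
    Matrix.mulVec_diagonal, signFlip]

theorem measure_linearSolution_pos_le (v : ℝ≥0) :
    (Measure.pi fun _ : Fin n => Measure.pi fun _ : Fin (n + 1) => gaussianReal 0 v)
      {ξ | ∀ j, 0 < linearSolution ξ j} ≤ ((2 : ℝ≥0∞) ^ n)⁻¹ := by
  set A := {ξ : Fin n → Fin (n + 1) → ℝ | ∀ j, 0 < linearSolution ξ j}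
  have h := measure_le_inv_card_of_pairwise_disjoint (E := fun s => signFlip s ⁻¹' A)
    (fun s => (measurePreserving_signFlip s v).measurable measurableSet_linearSolution_pos) ?_
    fun s => (measurePreserving_signFlip s v).measure_preimage
      measurableSet_linearSolution_pos.nullMeasurableSet
  · simpa using h
  intro s t hst
  obtain ⟨j, hj⟩ := Function.ne_iff.mp hst
  refine Set.disjoint_left.mpr fun ξ hs ht => ?_
  have hs := hs j
  have ht := ht j
  simp only [linearSolution_signFlip, Pi.mul_apply, signVec] at hs ht
  cases h1 : s j <;> cases h2 : t j <;> simp_all <;> linarith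

end SignSymmetry

open Set in
theorem ConvexOn.deriv_eq_zero_of_eq {h : ℝ → ℝ} (hh : ConvexOn ℝ univ h) {a b c : ℝ}
    (hab : a < b) (hbc : b < c) (ha : h a = h b) (hc : h c = h b) : deriv h b = 0 := by
  refine IsLocalMax.deriv_eq_zero (Filter.eventually_of_mem (Ioo_mem_nhds hab hbc) fun z hz => ?_)
  have hz' : z ∈ segment ℝ a c := by
    rw [segment_eq_Icc (hab.trans hbc).le]
    exact Ioo_subset_Icc_self hz
  simpa [ha, hc] using hh.le_on_segment (mem_univ a) (mem_univ c) hz'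

theorem convexOn_sum_mul_exp {ι : Type*} [Fintype ι] {w : ι → ℝ} (hw : ∀ k, 0 ≤ w k)
    (μ : ι → ℝ) : ConvexOn ℝ Set.univ fun t => ∑ k, w k * Real.exp (t * μ k) := by
  have hk : ∀ k, ConvexOn ℝ Set.univ fun t => w k * Real.exp (t * μ k) := fun k =>
    (convexOn_exp.comp_linearMap ((LinearMap.id : ℝ →ₗ[ℝ] ℝ).smulRight (μ k))).smul (hw k)
  have := Finset.sum_induction (s := Finset.univ) _ (ConvexOn ℝ Set.univ)
    (fun _ _ => ConvexOn.add) (convexOn_const 0 convex_univ) fun k _ => hk k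
  rwa [Finset.sum_fn] at this

theorem Set.encard_le_two_of_forall_not_lt_lt {α : Type*} [LinearOrder α] {T : Set α}
    (h : ∀ a ∈ T, ∀ b ∈ T, ∀ c ∈ T, a < b → b < c → False) : T.encard ≤ 2 := by
  by_contra! hT
  obtain ⟨S, hST, hS⟩ := Set.exists_subset_encard_eq (show (3 : ℕ∞) ≤ T.encard from
    Order.add_one_le_of_lt hT)
  obtain ⟨a, b, c, hab, hac, hbc, rfl⟩ := Set.encard_eq_three.mp hS
  have ha : a ∈ T := hST (by simp)
  have hb : b ∈ T := hST (by simp)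
  have hc : c ∈ T := hST (by simp)
  rcases hab.lt_or_gt with h1 | h1 <;> rcases hbc.lt_or_gt with h2 | h2 <;>
    rcases hac.lt_or_gt with h3 | h3
  all_goals first
    | exact h a ha b hb c hc ‹_› ‹_› | exact h a ha c hc b hb ‹_› ‹_›
    | exact h b hb a ha c hc ‹_› ‹_› | exact h b hb c hc a ha ‹_› ‹_›
    | exact h c hc a ha b hb ‹_› ‹_› | exact h c hc b hb a ha ‹_› ‹_›

theorem Matrix.of_fderiv_single_mulVec {ι κ : Type*} [Fintype κ] [DecidableEq κ]
    (F : ι → (κ → ℝ) → ℝ) (x w : κ → ℝ) :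
    (Matrix.of fun i j => fderiv ℝ (F i) x (Pi.single j 1)) *ᵥ w = fun i => fderiv ℝ (F i) x w := by
  ext i
  conv_rhs => rw [← Finset.univ_sum_single w]
  simp only [Matrix.mulVec, dotProduct, Matrix.of_apply, map_sum]
  refine Finset.sum_congr rfl fun j _ => ?_
  rw [mul_comm, ← smul_eq_mul, ← map_smul, ← Pi.single_smul, smul_eq_mul, mul_one]

theorem Matrix.exists_eq_smul_of_mulVec_eq_smul {ι : Type*} [Fintype ι] [DecidableEq ι]
    {M : Matrix ι ι ℝ} (hM : M.det ≠ 0) {p q b : ι → ℝ} {a a' : ℝ} (hp : M *ᵥ p = a • b)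
    (hq : M *ᵥ q = a' • b) (hp0 : p ≠ 0) : ∃ t : ℝ, q = t • p := by
  have ha : a ≠ 0 := by
    rintro rfl
    exact hp0 (Matrix.eq_zero_of_mulVec_eq_zero hM (by simpa using hp))
  refine ⟨a' / a, ?_⟩
  have h : M *ᵥ (a • q - a' • p) = 0 := by
    rw [Matrix.mulVec_sub, Matrix.mulVec_smul, Matrix.mulVec_smul, hp, hq, smul_smul, smul_smul,
      mul_comm, sub_self]
  rw [div_eq_inv_mul, mul_smul, ← sub_eq_zero.mp (Matrix.eq_zero_of_mulVec_eq_zero hM h),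
    inv_smul_smul₀ ha]

theorem Pi.mul_ne_zero_of_pos {ι : Type*} {x v : ι → ℝ} (hx : ∀ l, 0 < x l) (hv : v ≠ 0) :
    x * v ≠ 0 := fun h =>
  hv (funext fun l => (mul_eq_zero.mp (congrFun h l)).resolve_left (hx l).ne')

section ExpLine

variable {ι : Type*} (x v : ι → ℝ)

noncomputable def expLine (t : ℝ) : ι → ℝ := fun l => x l * Real.exp (t * v l)

@[simp] theorem expLine_zero : expLine x v 0 = x := by
  ext; simp [expLine]

variable {x v}

theorem expLine_pos (hx : ∀ l, 0 < x l) (t : ℝ) (l : ι) : 0 < expLine x v t l :=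
  mul_pos (hx l) (Real.exp_pos _)

theorem expLine_eq_of_log_sub_eq {x' : ι → ℝ} {t : ℝ} (hx : ∀ l, 0 < x l) (hx' : ∀ l, 0 < x' l)
    (h : Real.log ∘ x' - Real.log ∘ x = t • v) : expLine x v t = x' := by
  ext l
  have hl := congrFun h l
  simp only [Pi.sub_apply, Function.comp_apply, Pi.smul_apply, smul_eq_mul] at hl
  rw [expLine, ← hl, Real.exp_sub, Real.exp_log (hx l), Real.exp_log (hx' l)]
  field_simp [(hx l).ne']

theorem hasDerivAt_expLine (t : ℝ) : HasDerivAt (expLine x v) (expLine x v t * v) t := by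
  refine hasDerivAt_pi.mpr fun l => ?_
  simpa [expLine, mul_assoc, mul_comm (v l)] using
    ((hasDerivAt_mul_const (v l)).exp.const_mul (x l) : HasDerivAt _ _ t)

end ExpLine

section Monomial

variable {n : ℕ} (a : Fin n → ℤ)

theorem zmon_pos {x : Fin n → ℝ} (hx : ∀ l, 0 < x l) : 0 < zmon a x :=
  Finset.prod_pos fun l _ => zpow_pos (hx l) _

theorem log_zmon {x : Fin n → ℝ} (hx : ∀ l, 0 < x l) :
    Real.log (zmon a x) = (Int.cast ∘ a) ⬝ᵥ (Real.log ∘ x) := by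
  rw [zmon, Real.log_prod fun l _ => (zpow_pos (hx l) _).ne']
  exact Finset.sum_congr rfl fun l _ => by simp [Real.log_zpow]

theorem zmon_expLine (x v : Fin n → ℝ) (t : ℝ) :
    zmon a (expLine x v t) = zmon a x * Real.exp (t * ((Int.cast ∘ a) ⬝ᵥ v)) := by
  simp only [zmon, expLine, mul_zpow, Finset.prod_mul_distrib, ← Real.rpow_intCast, ← Real.exp_mul,
    ← Real.exp_sum, dotProduct, Finset.mul_sum]
  congr 2
  exact Finset.sum_congr rfl fun l _ => by simp; ring

theorem differentiableAt_zmon {x : Fin n → ℝ} (hx : ∀ l, x l ≠ 0) :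
    DifferentiableAt ℝ (zmon a) x := by
  unfold zmon
  fun_prop (disch := exact Or.inl (hx _))

end Monomial

section RandomSystem

variable {n m : ℕ} (β : Fin m → Fin n → ℤ) (c : Fin m → ℝ) (α : Fin n → Fin n → ℤ)
  (σ : Fin n → ℝ) (ξ : Fin n → Fin (n + 1) → ℝ)

noncomputable def monomialNorm (x : Fin n → ℝ) : ℝ :=
  √(∑ k, c k ^ 2 * zmon (fun l => 2 * β k l) x)

noncomputable def jacobianFsys (x : Fin n → ℝ) : Matrix (Fin n) (Fin n) ℝ :=
  Matrix.of fun i j => fderiv ℝ (fun y => Fsys β c α σ ξ i y) x (Pi.single j 1)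

def nondegSolutions : Set (Fin n → ℝ) :=
  {x | (∀ i, 0 < x i) ∧ (∀ i, Fsys β c α σ ξ i x = 0) ∧ (jacobianFsys β c α σ ξ x).det ≠ 0}

/-- `e^{-2τt} f(x e^{tv})²`, written as a positive combination of exponentials in `t`. -/
noncomputable def lineRadicand (x v : Fin n → ℝ) (τ t : ℝ) : ℝ :=
  ∑ k, c k ^ 2 * zmon (fun l => 2 * β k l) x *
    Real.exp (t * ((Int.cast ∘ fun l => 2 * β k l) ⬝ᵥ v - 2 * τ))

theorem Fsys_eq (i : Fin n) (x : Fin n → ℝ) :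
    Fsys β c α σ ξ i x = ξ i 0 * monomialNorm β c x + ∑ j, ξ i j.succ * σ j * zmon (α j) x :=
  rfl

variable {β c α σ ξ}

theorem differentiableAt_Fsys (i : Fin n) {x : Fin n → ℝ} (hx : ∀ l, 0 < x l)
    (hf : 0 < monomialNorm β c x) : DifferentiableAt ℝ (fun y => Fsys β c α σ ξ i y) x := by
  have hz : ∀ a : Fin n → ℤ, DifferentiableAt ℝ (zmon a) x :=
    fun a => differentiableAt_zmon a fun l => (hx l).ne'
  have hS : DifferentiableAt ℝ (fun y => √(∑ k, c k ^ 2 * zmon (fun l => 2 * β k l) y)) x :=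
    (DifferentiableAt.fun_sum fun k _ => (hz _).const_mul _).sqrt (Real.sqrt_pos.mp hf).ne'
  unfold Fsys
  fun_prop

theorem mul_zmon_eq_of_solution (hdet : (linearPart ξ).det ≠ 0) {x : Fin n → ℝ}
    (hsol : ∀ i, Fsys β c α σ ξ i x = 0) (j : Fin n) :
    σ j * zmon (α j) x = monomialNorm β c x * linearSolution ξ j := by
  have hA : linearPart ξ *ᵥ (fun j => σ j * zmon (α j) x)
      = monomialNorm β c x • fun i => -ξ i 0 := by
    ext i
    have := hsol i
    simp only [Fsys_eq, mul_assoc] at this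
    simp only [Matrix.mulVec, dotProduct, linearPart, Matrix.of_apply, Pi.smul_apply, smul_eq_mul]
    linear_combination this
  have h : (fun j => σ j * zmon (α j) x) = monomialNorm β c x • linearSolution ξ := by
    rw [linearSolution, ← Matrix.mulVec_smul, ← hA, Matrix.mulVec_mulVec,
      Matrix.nonsing_inv_mul _ (isUnit_iff_ne_zero.mpr hdet), Matrix.one_mulVec]
  exact congrFun h j

theorem linearSolution_pos_of_solution (hσ : ∀ j, 0 < σ j) (hdet : (linearPart ξ).det ≠ 0)
    {x : Fin n → ℝ} (hx : ∀ l, 0 < x l) (hsol : ∀ i, Fsys β c α σ ξ i x = 0) (j : Fin n) :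
    0 < linearSolution ξ j := by
  refine pos_of_mul_pos_right (a := monomialNorm β c x) ?_ (Real.sqrt_nonneg _)
  rw [← mul_zmon_eq_of_solution hdet hsol]
  exact mul_pos (hσ j) (zmon_pos _ hx)

theorem monomialNorm_pos_of_solution (hσ : ∀ j, 0 < σ j) (hdet : (linearPart ξ).det ≠ 0)
    {x : Fin n → ℝ} (hx : ∀ l, 0 < x l) (hsol : ∀ i, Fsys β c α σ ξ i x = 0) (j : Fin n) :
    0 < monomialNorm β c x := by
  refine pos_of_mul_pos_left (b := linearSolution ξ j) ?_
    (linearSolution_pos_of_solution hσ hdet hx hsol j).le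
  rw [← mul_zmon_eq_of_solution hdet hsol]
  exact mul_pos (hσ j) (zmon_pos _ hx)

theorem dotProduct_log_of_solution (hσ : ∀ j, 0 < σ j) (hdet : (linearPart ξ).det ≠ 0)
    {x : Fin n → ℝ} (hx : ∀ l, 0 < x l) (hsol : ∀ i, Fsys β c α σ ξ i x = 0) (j : Fin n) :
    (Int.cast ∘ α j) ⬝ᵥ (Real.log ∘ x)
      = Real.log (monomialNorm β c x) + Real.log (linearSolution ξ j) - Real.log (σ j) := by
  have h := congrArg Real.log (mul_zmon_eq_of_solution hdet hsol j)
  rw [Real.log_mul (hσ j).ne' (zmon_pos _ hx).ne',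
    Real.log_mul (monomialNorm_pos_of_solution hσ hdet hx hsol j).ne'
      (linearSolution_pos_of_solution hσ hdet hx hsol j).ne', log_zmon _ hx] at h
  linarith

theorem monomialNorm_expLine (x v : Fin n → ℝ) (τ t : ℝ) :
    monomialNorm β c (expLine x v t) = Real.exp (t * τ) * √(lineRadicand β c x v τ t) := by
  have h : ∑ k, c k ^ 2 * zmon (fun l => 2 * β k l) (expLine x v t)
      = Real.exp (t * τ) ^ 2 * lineRadicand β c x v τ t := by
    rw [lineRadicand, Finset.mul_sum]
    refine Finset.sum_congr rfl fun k _ => ?_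
    have he : Real.exp (t * τ) ^ 2 * Real.exp (t * ((Int.cast ∘ fun l => 2 * β k l) ⬝ᵥ v - 2 * τ))
        = Real.exp (t * ((Int.cast ∘ fun l => 2 * β k l) ⬝ᵥ v)) := by
      rw [sq, ← Real.exp_add, ← Real.exp_add]
      congr 1
      ring
    rw [zmon_expLine, ← he]
    ring
  rw [monomialNorm, h, Real.sqrt_mul (sq_nonneg _), Real.sqrt_sq (Real.exp_pos _).le]

theorem lineRadicand_pos {x v : Fin n → ℝ} {τ t : ℝ} (h : 0 < monomialNorm β c (expLine x v t)) :
    0 < lineRadicand β c x v τ t := by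
  rw [monomialNorm_expLine (τ := τ)] at h
  exact Real.sqrt_pos.mp (pos_of_mul_pos_right h (Real.exp_pos _).le)

theorem convexOn_lineRadicand {x : Fin n → ℝ} (hx : ∀ l, 0 < x l) (v : Fin n → ℝ) (τ : ℝ) :
    ConvexOn ℝ Set.univ (lineRadicand β c x v τ) :=
  convexOn_sum_mul_exp (fun _ => mul_nonneg (sq_nonneg _) (zmon_pos _ hx).le) _

theorem differentiable_lineRadicand (x v : Fin n → ℝ) (τ : ℝ) :
    Differentiable ℝ (lineRadicand β c x v τ) := by
  unfold lineRadicand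
  fun_prop

theorem sqrt_lineRadicand_mul_eq {x v : Fin n → ℝ} {τ t : ℝ}
    (hv : ∀ j, (Int.cast ∘ α j) ⬝ᵥ v = τ) (hdet : (linearPart ξ).det ≠ 0)
    (hsol : ∀ i, Fsys β c α σ ξ i (expLine x v t) = 0) (j : Fin n) :
    √(lineRadicand β c x v τ t) * linearSolution ξ j = σ j * zmon (α j) x := by
  have h := mul_zmon_eq_of_solution hdet hsol j
  rw [zmon_expLine, hv, monomialNorm_expLine (τ := τ)] at h
  apply mul_left_cancel₀ (Real.exp_pos (t * τ)).ne'
  linear_combination -h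

theorem jacobianFsys_mulVec_expLine {x v : Fin n → ℝ} {τ s : ℝ}
    (hv : ∀ j, (Int.cast ∘ α j) ⬝ᵥ v = τ) (hx : ∀ l, 0 < x l)
    (hsol : ∀ i, Fsys β c α σ ξ i (expLine x v s) = 0) (hg : 0 < lineRadicand β c x v τ s) :
    jacobianFsys β c α σ ξ (expLine x v s) *ᵥ (expLine x v s * v)
      = (Real.exp (s * τ) * (deriv (lineRadicand β c x v τ) s / (2 * √(lineRadicand β c x v τ s))))
        • fun i => ξ i 0 := by
  set g := lineRadicand β c x v τ
  rw [jacobianFsys, Matrix.of_fderiv_single_mulVec]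
  ext i
  set G := ∑ j, ξ i j.succ * σ j * zmon (α j) x
  have hF : (fun t => Fsys β c α σ ξ i (expLine x v t))
      = fun t => Real.exp (t * τ) * (ξ i 0 * √(g t) + G) := by
    ext t
    simp only [Fsys_eq, monomialNorm_expLine (τ := τ), zmon_expLine, hv, G]
    rw [mul_add, Finset.mul_sum]
    congr 1
    · ring
    · exact Finset.sum_congr rfl fun j _ => by ring
  have hzero : ξ i 0 * √(g s) + G = 0 := by
    have h : Real.exp (s * τ) * (ξ i 0 * √(g s) + G) = 0 := (congrFun hF s).symm.trans (hsol i)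
    exact (mul_eq_zero.mp h).resolve_left (Real.exp_pos _).ne'
  have hderiv : HasDerivAt (fun t => Real.exp (t * τ) * (ξ i 0 * √(g t) + G))
      (Real.exp (s * τ) * (ξ i 0 * (deriv g s / (2 * √(g s))))) s := by
    have h1 := ((differentiable_lineRadicand x v τ s).hasDerivAt.sqrt hg.ne').const_mul (ξ i 0)
    refine ((hasDerivAt_mul_const τ).exp.mul (h1.add_const G)).congr_deriv ?_
    rw [hzero]
    ring
  have hf : 0 < monomialNorm β c (expLine x v s) := by
    rw [monomialNorm_expLine (τ := τ)]
    exact mul_pos (Real.exp_pos _) (Real.sqrt_pos.mpr hg)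
  have hchain : HasDerivAt (fun t => Fsys β c α σ ξ i (expLine x v t))
      (fderiv ℝ (fun y => Fsys β c α σ ξ i y) (expLine x v s) (expLine x v s * v)) s :=
    (differentiableAt_Fsys i (expLine_pos hx s) hf).hasFDerivAt.comp_hasDerivAt s
      (hasDerivAt_expLine s)
  rw [hF] at hchain
  rw [hchain.unique hderiv, Pi.smul_apply, smul_eq_mul]
  ring

theorem exists_eq_smul_of_mem_nondegSolutions {x : Fin n → ℝ}
    (hx : x ∈ nondegSolutions β c α σ ξ) (hf : 0 < monomialNorm β c x) {v w : Fin n → ℝ}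
    {τ τ' : ℝ} (hv : ∀ j, (Int.cast ∘ α j) ⬝ᵥ v = τ) (hw : ∀ j, (Int.cast ∘ α j) ⬝ᵥ w = τ')
    (hv0 : v ≠ 0) : ∃ t : ℝ, w = t • v := by
  obtain ⟨hxpos, hsol, hJ⟩ := hx
  have hsol0 : ∀ {u : Fin n → ℝ}, ∀ i, Fsys β c α σ ξ i (expLine x u 0) = 0 := by
    simpa using hsol
  have hf0 : ∀ {u : Fin n → ℝ}, 0 < monomialNorm β c (expLine x u 0) := by simpa using hf
  have h1 := jacobianFsys_mulVec_expLine hv hxpos hsol0 (lineRadicand_pos hf0)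
  have h2 := jacobianFsys_mulVec_expLine hw hxpos hsol0 (lineRadicand_pos hf0)
  simp only [expLine_zero] at h1 h2
  obtain ⟨t, ht⟩ := Matrix.exists_eq_smul_of_mulVec_eq_smul hJ h1 h2
    (Pi.mul_ne_zero_of_pos hxpos hv0)
  refine ⟨t, funext fun l => mul_left_cancel₀ (hxpos l).ne' ?_⟩
  simpa [mul_left_comm] using congrFun ht l

theorem det_jacobianFsys_expLine_eq_zero (hσ : ∀ j, 0 < σ j) (hdet : (linearPart ξ).det ≠ 0)
    {x v : Fin n → ℝ} {τ : ℝ} (hx : ∀ l, 0 < x l) (hv : ∀ j, (Int.cast ∘ α j) ⬝ᵥ v = τ)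
    (hv0 : v ≠ 0) {a b d : ℝ} (hab : a < b) (hbd : b < d)
    (ha : ∀ i, Fsys β c α σ ξ i (expLine x v a) = 0)
    (hb : ∀ i, Fsys β c α σ ξ i (expLine x v b) = 0)
    (hd : ∀ i, Fsys β c α σ ξ i (expLine x v d) = 0) :
    (jacobianFsys β c α σ ξ (expLine x v b)).det = 0 := by
  obtain ⟨j, -⟩ := Function.ne_iff.mp hv0
  set g := lineRadicand β c x v τ
  have hpos : ∀ t, (∀ i, Fsys β c α σ ξ i (expLine x v t) = 0) → 0 < g t := fun t ht =>
    lineRadicand_pos (monomialNorm_pos_of_solution hσ hdet (expLine_pos hx t) ht j)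
  have hconst : ∀ t, (∀ i, Fsys β c α σ ξ i (expLine x v t) = 0) → g t = g b := by
    intro t ht
    have hy := linearSolution_pos_of_solution hσ hdet (expLine_pos hx t) ht j
    rw [← Real.sq_sqrt (hpos t ht).le, ← Real.sq_sqrt (hpos b hb).le,
      mul_right_cancel₀ hy.ne' ((sqrt_lineRadicand_mul_eq hv hdet ht j).trans
        (sqrt_lineRadicand_mul_eq hv hdet hb j).symm)]
  have hderiv : deriv g b = 0 :=
    (convexOn_lineRadicand hx v τ).deriv_eq_zero_of_eq hab hbd (hconst a ha) (hconst d hd)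
  by_contra hJ
  have h := jacobianFsys_mulVec_expLine hv hx hb (hpos b hb)
  rw [hderiv, zero_div, mul_zero, zero_smul] at h
  exact Pi.mul_ne_zero_of_pos (expLine_pos hx b) hv0 (Matrix.eq_zero_of_mulVec_eq_zero hJ h)

theorem encard_nondegSolutions_le_two (hσ : ∀ j, 0 < σ j) (hdet : (linearPart ξ).det ≠ 0) :
    (nondegSolutions β c α σ ξ).encard ≤ 2 := by
  obtain hS | ⟨x₁, hx₁, x₂, hx₂, hne⟩ := (nondegSolutions β c α σ ξ).subsingleton_or_nontrivial
  · exact (Set.encard_le_one_iff_subsingleton.mpr hS).trans (by norm_num)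
  obtain ⟨j, -⟩ := Function.ne_iff.mp hne
  have hlog : ∀ {x x'}, x ∈ nondegSolutions β c α σ ξ → x' ∈ nondegSolutions β c α σ ξ →
      ∀ k, (Int.cast ∘ α k) ⬝ᵥ (Real.log ∘ x' - Real.log ∘ x)
        = Real.log (monomialNorm β c x') - Real.log (monomialNorm β c x) := by
    intro x x' hx hx' k
    rw [dotProduct_sub, dotProduct_log_of_solution hσ hdet hx'.1 hx'.2.1,
      dotProduct_log_of_solution hσ hdet hx.1 hx.2.1]
    ring
  set v := Real.log ∘ x₂ - Real.log ∘ x₁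
  have hv0 : v ≠ 0 := fun h => hne <| by
    rw [← expLine_eq_of_log_sub_eq hx₁.1 hx₂.1 (t := 1) (v := 0) (by simpa using h)]
    ext l
    simp [expLine]
  set T := {t : ℝ | expLine x₁ v t ∈ nondegSolutions β c α σ ξ}
  have hsub : nondegSolutions β c α σ ξ ⊆ expLine x₁ v '' T := by
    intro x hx
    obtain ⟨t, ht⟩ := exists_eq_smul_of_mem_nondegSolutions hx₁
      (monomialNorm_pos_of_solution hσ hdet hx₁.1 hx₁.2.1 j) (hlog hx₁ hx₂) (hlog hx₁ hx) hv0
    have hxt := expLine_eq_of_log_sub_eq hx₁.1 hx.1 ht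
    exact ⟨t, by rwa [Set.mem_ofPred_eq, hxt], hxt⟩
  have hT : ∀ a ∈ T, ∀ b ∈ T, ∀ d ∈ T, a < b → b < d → False := fun a ha b hb d hd hab hbd =>
    hb.2.2 (det_jacobianFsys_expLine_eq_zero hσ hdet hx₁.1 (hlog hx₁ hx₂) hv0 hab hbd
      ha.2.1 hb.2.1 hd.2.1)
  calc (nondegSolutions β c α σ ξ).encard ≤ (expLine x₁ v '' T).encard := Set.encard_mono hsub
    _ ≤ T.encard := Set.encard_image_le _ _
    _ ≤ 2 := Set.encard_le_two_of_forall_not_lt_lt hT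

end RandomSystem

theorem expected_solutions_special_le_general (n m : ℕ)
    (β : Fin m → Fin n → ℤ) (c : Fin m → ℝ)
    (α : Fin n → Fin n → ℤ) (σ : Fin n → ℝ) (hσ : ∀ j, 0 < σ j) :
    (∫⁻ ξ : Fin n → Fin (n + 1) → ℝ,
        (Set.encard {x : Fin n → ℝ | (∀ i, 0 < x i) ∧
            (∀ i, Fsys β c α σ ξ i x = 0) ∧
            (Matrix.of fun i j : Fin n =>
                fderiv ℝ (fun y => Fsys β c α σ ξ i y) x (Pi.single j 1)).det ≠ 0} : ℝ≥0∞)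
      ∂(Measure.pi fun _ : Fin n => Measure.pi fun _ : Fin (n + 1) => gaussianReal 0 1))
    ≤ 2 / 2 ^ n := by
  have := nullSingletonClass_gaussianReal (μ := 0) one_ne_zero
  set μ := Measure.pi fun _ : Fin n => Measure.pi fun _ : Fin (n + 1) => gaussianReal 0 1
  set E := {ξ : Fin n → Fin (n + 1) → ℝ | ∀ j, 0 < linearSolution ξ j}
  have hbound : ∀ᵐ ξ ∂μ,
      ((nondegSolutions β c α σ ξ).encard : ℝ≥0∞) ≤ E.indicator (fun _ => 2) ξ := by
    filter_upwards [ae_det_ne_zero_of_injective (gaussianReal 0 1) (Fin.succ_injective n)]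
      with ξ hdet
    by_cases hξ : ξ ∈ E
    · rw [Set.indicator_of_mem hξ]
      exact_mod_cast encard_nondegSolutions_le_two hσ hdet
    · rw [show nondegSolutions β c α σ ξ = ∅ from Set.eq_empty_of_forall_notMem fun x hx =>
        hξ fun j => linearSolution_pos_of_solution hσ hdet hx.1 hx.2.1 j]
      simp
  calc _ ≤ ∫⁻ ξ, E.indicator (fun _ => 2) ξ ∂μ := lintegral_mono_ae hbound
    _ = 2 * μ E := lintegral_indicator_const measurableSet_linearSolution_pos 2
    _ ≤ 2 * ((2 : ℝ≥0∞) ^ n)⁻¹ := by gcongr; exact measure_linearSolution_pos_le 1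
    _ = 2 / 2 ^ n := (div_eq_mul_inv _ _).symm

/-- **Lemma (expected number of solutions of the special random system).** With
`f(x) = (∑_j c_j² x^{2β_j})^{1/2}` (`c_j ≠ 0`), exponents `α₁, …, αₙ ∈ ℤⁿ`, `σ_j > 0` and
i.i.d. standard Gaussians `ξ_{i,j}`, the expected number of nondegenerate solutions in
`ℝ_{>0}ⁿ` of the system `ξ_{i,0} f(x) + ∑_j ξ_{i,j} σ_j x^{α_j} = 0` is at most
`2·2^{-n} = 2^{1-n}`. -/
theorem expected_solutions_special_le (n m : ℕ)
    (β : Fin m → Fin n → ℤ) (c : Fin m → ℝ) (hc : ∀ j, c j ≠ 0)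
    (α : Fin n → Fin n → ℤ) (σ : Fin n → ℝ) (hσ : ∀ j, 0 < σ j) :
    (∫⁻ ξ : Fin n → Fin (n + 1) → ℝ,
        (Set.encard {x : Fin n → ℝ | (∀ i, 0 < x i) ∧
            (∀ i, Fsys β c α σ ξ i x = 0) ∧
            (Matrix.of fun i j : Fin n =>
                fderiv ℝ (fun y => Fsys β c α σ ξ i y) x (Pi.single j 1)).det ≠ 0} : ℝ≥0∞)
      ∂(Measure.pi fun _ : Fin n => Measure.pi fun _ : Fin (n + 1) => gaussianReal 0 1))
    ≤ 2 / 2 ^ n :=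
  expected_solutions_special_le_general n m β c α σ hσ
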